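/- (Corollary 3 of the paper.) Let μ₀, μ₁ : 𝒫(V) → ℝ_{>0} with μ_w(∅) = 1, and suppose for each w ∈ {0,1} there is a common partition of a set D ⊆ V into nonempty disjoint A, B with μ_w(D') = μ_w(D' ∩ A) · μ_w(D' ∩ B) for all D' ⊆ D. Define RR(D') = μ₁(D')/μ₀(D'), α(E) = Σ_{E' ⊆ E} (-1)^{|E \ E'|} log RR(E'), and MCE(D) = Π_{D' ⊊ D} exp(α(D')). Then RR(D) = MCE(D). -/

import Mathlib

/-! Möbius inversion over the subset lattice gives `log RR D = ∑_{E ⊆ D} α(E)`, that is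
`RR D = exp (α D) * MCE D`. Under independence `log RR E = log RR (E ∩ A) + log RR (E ∩ B)` for
`E ⊆ D`, and the Möbius transform of a function that ignores some point of `D` vanishes at `D`
(the subsets with and without that point cancel in pairs). Since `D` contains points outside `A`
and points outside `B`, `α D = 0`. -/

open Finset Real

namespace Finset

variable {α R : Type*} [DecidableEq α] [CommRing R]

def moebiusTransform (f : Finset α → R) (s : Finset α) : R :=
  ∑ t ∈ s.powerset, (-1) ^ #(s \ t) * f t

theorem sum_Icc_neg_one_pow_card_sdiff {s t : Finset α} (h : s ⊆ t) :
    ∑ u ∈ Icc s t, (-1 : R) ^ #(u \ s) = if s = t then 1 else 0 := by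
  have hcancel : ∀ v ∈ (t \ s).powerset, (s ∪ v) \ s = v := fun v hv =>
    union_sdiff_cancel_left (disjoint_sdiff.mono_right (mem_powerset.mp hv))
  have hpow : ∑ v ∈ (t \ s).powerset, (-1 : R) ^ #v = if t \ s = ∅ then 1 else 0 := by
    exact_mod_cast congrArg (Int.cast : ℤ → R) (sum_powerset_neg_one_pow_card (x := t \ s))
  rw [Icc_eq_image_powerset h, sum_image fun v hv w hw hvw => by
      rw [← hcancel v hv, ← hcancel w hw, hvw], sum_congr rfl fun v hv => by rw [hcancel v hv],
    hpow]
  exact if_congr (sdiff_eq_empty_iff_subset.trans ⟨subset_antisymm h, fun hst => hst ▸ subset_refl s⟩)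
    rfl rfl

theorem sum_powerset_moebiusTransform (f : Finset α → R) (s : Finset α) :
    ∑ t ∈ s.powerset, moebiusTransform f t = f s := by
  unfold moebiusTransform
  rw [sum_comm' (t' := s.powerset) (s' := fun u => Icc u s) fun t u => by
    simp only [mem_powerset, mem_Icc]
    exact ⟨fun ⟨hts, hut⟩ => ⟨⟨hut, hts⟩, hut.trans hts⟩, fun ⟨⟨hut, hts⟩, _⟩ => ⟨hts, hut⟩⟩]
  calc ∑ u ∈ s.powerset, ∑ t ∈ Icc u s, (-1 : R) ^ #(t \ u) * f u
      = ∑ u ∈ s.powerset, (if u = s then 1 else 0) * f u := sum_congr rfl fun u hu => by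
        rw [← sum_mul, sum_Icc_neg_one_pow_card_sdiff (mem_powerset.mp hu)]
    _ = f s := by simp only [ite_mul, one_mul, zero_mul, sum_ite_eq', mem_powerset_self, if_true]

theorem sum_ssubsets_moebiusTransform {f : Finset α → R} {s : Finset α}
    (h : moebiusTransform f s = 0) : ∑ t ∈ s.powerset.erase s, moebiusTransform f t = f s := by
  rw [← sum_powerset_moebiusTransform f s, ← sum_erase_add _ _ (mem_powerset_self s), h, add_zero]

theorem moebiusTransform_add (f g : Finset α → R) (s : Finset α) :
    moebiusTransform (f + g) s = moebiusTransform f s + moebiusTransform g s := by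
  simp only [moebiusTransform, Pi.add_apply, mul_add, sum_add_distrib]

theorem moebiusTransform_congr {f g : Finset α → R} {s : Finset α} (h : ∀ t ⊆ s, f t = g t) :
    moebiusTransform f s = moebiusTransform g s :=
  sum_congr rfl fun t ht => by rw [h t (mem_powerset.mp ht)]

theorem moebiusTransform_insert_eq_zero {f : Finset α → R} {s : Finset α} {a : α} (ha : a ∉ s)
    (hf : ∀ t ⊆ s, f (insert a t) = f t) : moebiusTransform f (insert a s) = 0 := by
  unfold moebiusTransform
  rw [sum_powerset_insert ha, ← sum_add_distrib]
  refine sum_eq_zero fun t ht => ?_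
  have hts : t ⊆ s := mem_powerset.mp ht
  rw [insert_sdiff_of_notMem s fun hat => ha (hts hat), insert_sdiff_insert,
    sdiff_insert_of_notMem ha, card_insert_of_notMem fun has => ha (mem_sdiff.mp has).1,
    hf t hts, pow_succ]
  ring

theorem moebiusTransform_comp_inter_eq_zero (g : Finset α → R) {s A : Finset α} (h : ¬s ⊆ A) :
    moebiusTransform (fun t => g (t ∩ A)) s = 0 := by
  obtain ⟨a, has, haA⟩ := not_subset.mp h
  rw [← insert_erase has]
  exact moebiusTransform_insert_eq_zero (notMem_erase a s) fun t _ => by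
    rw [insert_inter_of_notMem haA]

theorem moebiusTransform_union_eq_zero {f : Finset α → R} {A B : Finset α} (hA : A.Nonempty)
    (hB : B.Nonempty) (hAB : Disjoint A B) (hf : ∀ t ⊆ A ∪ B, f t = f (t ∩ A) + f (t ∩ B)) :
    moebiusTransform f (A ∪ B) = 0 := by
  have hnotA : ¬A ∪ B ⊆ A := fun h => by
    obtain ⟨b, hb⟩ := hB
    exact disjoint_left.mp hAB (h (mem_union_right A hb)) hb
  have hnotB : ¬A ∪ B ⊆ B := fun h => by
    obtain ⟨a, ha⟩ := hA
    exact disjoint_left.mp hAB ha (h (mem_union_left B ha))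
  rw [moebiusTransform_congr (g := (fun t => f (t ∩ A)) + fun t => f (t ∩ B)) hf,
    moebiusTransform_add, moebiusTransform_comp_inter_eq_zero f hnotA,
    moebiusTransform_comp_inter_eq_zero f hnotB, add_zero]

end Finset

theorem corollary3_RR_eq_MCE_of_independence_general
    {α : Type*} [DecidableEq α]
    (μ₀ μ₁ : Finset α → ℝ)
    (hpos₀ : ∀ E, 0 < μ₀ E) (hpos₁ : ∀ E, 0 < μ₁ E)
    (D : Finset α)
    (A B : Finset α) (hA : A.Nonempty) (hB : B.Nonempty)
    (hdisj : Disjoint A B) (hunion : A ∪ B = D)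
    (hfact₀ : ∀ D' ⊆ D, μ₀ D' = μ₀ (D' ∩ A) * μ₀ (D' ∩ B))
    (hfact₁ : ∀ D' ⊆ D, μ₁ D' = μ₁ (D' ∩ A) * μ₁ (D' ∩ B))
    (RR : Finset α → ℝ) (hRR : ∀ E, RR E = μ₁ E / μ₀ E)
    (a : Finset α → ℝ)
    (ha : ∀ E, a E = ∑ E' ∈ E.powerset, (-1 : ℝ) ^ ((E \ E').card) * Real.log (RR E'))
    (MCE : Finset α → ℝ)
    (hMCE : ∀ E, MCE E = ∏ E' ∈ E.powerset.erase E, Real.exp (a E')) :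
    RR D = MCE D := by
  have hRRpos : ∀ E, 0 < RR E := fun E => hRR E ▸ div_pos (hpos₁ E) (hpos₀ E)
  have ha' : a = moebiusTransform fun E => log (RR E) := funext ha
  have hlogRR : ∀ E ⊆ A ∪ B, log (RR E) = log (RR (E ∩ A)) + log (RR (E ∩ B)) := by
    intro E hE
    rw [hunion] at hE
    rw [hRR, hRR, hRR, hfact₀ E hE, hfact₁ E hE, mul_div_mul_comm,
      log_mul (hRR _ ▸ hRRpos _).ne' (hRR _ ▸ hRRpos _).ne']
  have haD : a D = 0 := by
    rw [ha', ← hunion]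
    exact moebiusTransform_union_eq_zero hA hB hdisj hlogRR
  rw [hMCE, ← exp_sum, ha', sum_ssubsets_moebiusTransform (ha' ▸ haD), exp_log (hRRpos D)]

theorem corollary3_RR_eq_MCE_of_independence
    {α : Type*} [DecidableEq α] (V : Finset α)
    (μ₀ μ₁ : Finset α → ℝ)
    (hpos₀ : ∀ E, 0 < μ₀ E) (hpos₁ : ∀ E, 0 < μ₁ E)
    (hempty₀ : μ₀ ∅ = 1) (hempty₁ : μ₁ ∅ = 1)
    (D : Finset α) (hD : D ⊆ V)
    (A B : Finset α) (hA : A.Nonempty) (hB : B.Nonempty)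
    (hdisj : Disjoint A B) (hunion : A ∪ B = D)
    (hfact₀ : ∀ D' ⊆ D, μ₀ D' = μ₀ (D' ∩ A) * μ₀ (D' ∩ B))
    (hfact₁ : ∀ D' ⊆ D, μ₁ D' = μ₁ (D' ∩ A) * μ₁ (D' ∩ B))
    (RR : Finset α → ℝ) (hRR : ∀ E, RR E = μ₁ E / μ₀ E)
    (a : Finset α → ℝ)
    (ha : ∀ E, a E = ∑ E' ∈ E.powerset, (-1 : ℝ) ^ ((E \ E').card) * Real.log (RR E'))
    (MCE : Finset α → ℝ)
    (hMCE : ∀ E, MCE E = ∏ E' ∈ E.powerset.erase E, Real.exp (a E')) :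
    RR D = MCE D :=
  corollary3_RR_eq_MCE_of_independence_general μ₀ μ₁ hpos₀ hpos₁ D A B hA hB hdisj hunion hfact₀
    hfact₁ RR hRR a ha MCE hMCE
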